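/- In the restricted class-segregated buffer model with exactly one queue per value v_1 < ... < v_m, all queues of capacity B, GREEDY is (1+r)-competitive, where r = max_{1 ≤ i ≤ m-1} v_i/v_{i+1}: for every input sequence σ, OPT(σ) ≤ (1+r) · GREEDY(σ). -/
import Mathlib


/-!
Model of class-segregated buffer management (Al-Bawani, Souza).

A switch has `n` queues and `m` packet values `val : Fin m → ℝ`; queue `q` is
assigned value index `qval q` and has capacity `cap q`.  An input sequence is a
list of events: an `arrive q` event (a packet destined to queue `q`) or a
`send` event.  A (diligent) schedule is given by its decisions at send events,
`dec : ℕ → Option (Fin n)` (decision for the `k`-th send event): acceptance is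
forced (accept iff the destination queue is not full), at a send event the
schedule transmits one packet from the chosen non-empty queue, and it may
choose `none` only if all queues are empty.  `run` simulates the schedule,
tracking queue contents, the number of accepted packets of each value, and the
number of transmitted packets of each value.  `Feasible` expresses diligence,
and `GreedyFeasible` additionally requires that every transmitted packet has
the highest value among non-empty queues (ties broken arbitrarily).
`benefit` is the total value of transmitted packets.
-/

namespace BufferModel

inductive BEvent (n : ℕ) : Type where
  | arrive (q : Fin n) : BEvent n
  | send : BEvent n
deriving DecidableEq

/-- `queue q` = number of packets currently in queue `q`; `acc i` = number of
packets of value index `i` accepted so far; `trans i` = number of packets of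
value index `i` transmitted so far. -/
structure BState (n m : ℕ) where
  queue : Fin n → ℕ
  acc : Fin m → ℕ
  trans : Fin m → ℕ

def initState (n m : ℕ) : BState n m :=
  ⟨fun _ => 0, fun _ => 0, fun _ => 0⟩

/-- Diligent processing of an arrive event at queue `q`: accept iff there is room. -/
def arriveStep {n m : ℕ} (cap : Fin n → ℕ) (qval : Fin n → Fin m)
    (s : BState n m) (q : Fin n) : BState n m :=
  if s.queue q < cap q then
    { queue := Function.update s.queue q (s.queue q + 1)
      acc := Function.update s.acc (qval q) (s.acc (qval q) + 1)
      trans := s.trans }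
  else s

/-- Processing of a send event with decision `d`. -/
def sendStep {n m : ℕ} (qval : Fin n → Fin m) (s : BState n m)
    (d : Option (Fin n)) : BState n m :=
  match d with
  | some q =>
      if 0 < s.queue q then
        { queue := Function.update s.queue q (s.queue q - 1)
          acc := s.acc
          trans := Function.update s.trans (qval q) (s.trans (qval q) + 1) }
      else s
  | none => s

/-- Simulate the schedule with send-decisions `dec` on an event list, starting
with send-counter `k` and state `s`. -/
def run {n m : ℕ} (cap : Fin n → ℕ) (qval : Fin n → Fin m)
    (dec : ℕ → Option (Fin n)) :
    List (BEvent n) → ℕ → BState n m → BState n m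
  | [], _, s => s
  | BEvent.arrive q :: es, k, s => run cap qval dec es k (arriveStep cap qval s q)
  | BEvent.send :: es, k, s => run cap qval dec es (k + 1) (sendStep qval s (dec k))

/-- The schedule `dec` is feasible (diligent): at each send event it transmits
from a non-empty queue, and it stays idle only if all queues are empty. -/
def Feasible {n m : ℕ} (cap : Fin n → ℕ) (qval : Fin n → Fin m)
    (dec : ℕ → Option (Fin n)) :
    List (BEvent n) → ℕ → BState n m → Prop
  | [], _, _ => True
  | BEvent.arrive q :: es, k, s => Feasible cap qval dec es k (arriveStep cap qval s q)
  | BEvent.send :: es, k, s =>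
      (match dec k with
       | some q => 0 < s.queue q
       | none => ∀ q, s.queue q = 0) ∧
      Feasible cap qval dec es (k + 1) (sendStep qval s (dec k))

/-- The schedule `dec` is a GREEDY schedule: feasible, and at every send event
it transmits a packet from a non-empty queue of the highest value. -/
def GreedyFeasible {n m : ℕ} (val : Fin m → ℝ) (cap : Fin n → ℕ)
    (qval : Fin n → Fin m) (dec : ℕ → Option (Fin n)) :
    List (BEvent n) → ℕ → BState n m → Prop
  | [], _, _ => True
  | BEvent.arrive q :: es, k, s =>
      GreedyFeasible val cap qval dec es k (arriveStep cap qval s q)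
  | BEvent.send :: es, k, s =>
      (match dec k with
       | some q => 0 < s.queue q ∧
           ∀ q', 0 < s.queue q' → val (qval q') ≤ val (qval q)
       | none => ∀ q, s.queue q = 0) ∧
      GreedyFeasible val cap qval dec es (k + 1) (sendStep qval s (dec k))

/-- Benefit of a schedule: total value of the transmitted packets. -/
def benefit {n m : ℕ} (val : Fin m → ℝ) (s : BState n m) : ℝ :=
  ∑ i, val i * (s.trans i : ℝ)

end BufferModel

namespace BufferModel

section Aux

variable {m : ℕ}

/-- Potential function: total value of packets that `d` holds in excess of `g`,
per queue (using truncated subtraction). -/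
def Phi (v : Fin m → ℝ) (f g : Fin m → ℕ) : ℝ :=
  ∑ i, v i * ((f i - g i : ℕ) : ℝ)

lemma Phi_nonneg (v : Fin m → ℝ) (hpos : ∀ i, 0 < v i) (f g : Fin m → ℕ) :
    0 ≤ Phi v f g :=
  Finset.sum_nonneg fun i _ => mul_nonneg (hpos i).le (Nat.cast_nonneg _)

lemma sum_diff_single (F G : Fin m → ℝ) (p : Fin m) (h : ∀ i, i ≠ p → F i = G i) :
    ∑ i, F i = (∑ i, G i) + (F p - G p) := by
  have h1 := Finset.add_sum_erase Finset.univ F (Finset.mem_univ p)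
  have h2 := Finset.add_sum_erase Finset.univ G (Finset.mem_univ p)
  have h3 : ∑ i ∈ Finset.univ.erase p, F i = ∑ i ∈ Finset.univ.erase p, G i :=
    Finset.sum_congr rfl fun i hi => h i (Finset.ne_of_mem_erase hi)
  linarith

lemma Phi_update_left (v : Fin m → ℝ) (f g : Fin m → ℕ) (p : Fin m) (a : ℕ) :
    Phi v (Function.update f p a) g =
      Phi v f g + (v p * ((a - g p : ℕ) : ℝ) - v p * ((f p - g p : ℕ) : ℝ)) := by
  unfold Phi
  rw [sum_diff_single (fun i => v i * ((Function.update f p a i - g i : ℕ) : ℝ))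
      (fun i => v i * ((f i - g i : ℕ) : ℝ)) p
      (fun i hi => by simp [Function.update_of_ne hi])]
  simp

lemma Phi_update_right (v : Fin m → ℝ) (f g : Fin m → ℕ) (q : Fin m) (b : ℕ) :
    Phi v f (Function.update g q b) =
      Phi v f g + (v q * ((f q - b : ℕ) : ℝ) - v q * ((f q - g q : ℕ) : ℝ)) := by
  unfold Phi
  rw [sum_diff_single (fun i => v i * ((f i - Function.update g q b i : ℕ) : ℝ))
      (fun i => v i * ((f i - g i : ℕ) : ℝ)) q
      (fun i hi => by simp [Function.update_of_ne hi])]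
  simp

lemma benefit_arrive (v : Fin m → ℝ) (B : ℕ) (s : BState m m) (q : Fin m) :
    benefit v (arriveStep (fun _ => B) id s q) = benefit v s := by
  unfold arriveStep
  split <;> rfl

lemma benefit_send (v : Fin m → ℝ) (s : BState m m) (q : Fin m) (h : 0 < s.queue q) :
    benefit v (sendStep id s (some q)) = benefit v s + v q := by
  simp only [sendStep, if_pos h]
  unfold benefit
  rw [sum_diff_single
      (fun i => v i * ((Function.update s.trans (id q) (s.trans (id q) + 1) i : ℕ) : ℝ))
      (fun i => v i * ((s.trans i : ℕ) : ℝ)) q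
      (fun i hi => by simp [Function.update_of_ne hi])]
  simp; ring

lemma arrive_Phi (v : Fin m → ℝ) (hpos : ∀ i, 0 < v i) (B : ℕ)
    (sd sg : BState m m) (q : Fin m) :
    Phi v (arriveStep (fun _ => B) id sd q).queue (arriveStep (fun _ => B) id sg q).queue ≤
      Phi v sd.queue sg.queue := by
  unfold arriveStep
  by_cases h1 : sd.queue q < B <;> by_cases h2 : sg.queue q < B <;> simp only [h1, h2, if_pos, if_neg, if_true, if_false]
  · -- both accept
    rw [Phi_update_right, Phi_update_left, Function.update_self]
    have e1 : sd.queue q + 1 - (sg.queue q + 1) = sd.queue q - sg.queue q := by omega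
    rw [e1]
    have e2 : Function.update sd.queue q (sd.queue q + 1) q = sd.queue q + 1 :=
      Function.update_self _ _ _
    linarith
  · -- d accepts, g rejects
    rw [Phi_update_left]
    have e1 : sd.queue q + 1 - sg.queue q = 0 := by omega
    have e2 : sd.queue q - sg.queue q = 0 := by omega
    rw [e1, e2]
    simp
  · -- d rejects, g accepts
    rw [Phi_update_right]
    have e1 : (sd.queue q - (sg.queue q + 1) : ℕ) ≤ sd.queue q - sg.queue q := by omega
    have e2 : ((sd.queue q - (sg.queue q + 1) : ℕ) : ℝ) ≤ ((sd.queue q - sg.queue q : ℕ) : ℝ) :=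
      Nat.cast_le.2 e1
    nlinarith [(hpos q).le]
  · exact le_refl _

lemma r_pos (v : Fin m → ℝ) (hpos : ∀ i, 0 < v i) (r : ℝ)
    (hr : IsGreatest
      {x : ℝ | ∃ i : ℕ, ∃ h : i + 1 < m,
        x = v ⟨i, Nat.lt_of_succ_lt h⟩ / v ⟨i + 1, h⟩} r) : 0 < r := by
  obtain ⟨i, hi, hx⟩ := hr.1
  rw [hx]; exact div_pos (hpos _) (hpos _)

lemma v_le_r_mul (v : Fin m → ℝ) (hpos : ∀ i, 0 < v i) (hmono : StrictMono v) (r : ℝ)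
    (hr : IsGreatest
      {x : ℝ | ∃ i : ℕ, ∃ h : i + 1 < m,
        x = v ⟨i, Nat.lt_of_succ_lt h⟩ / v ⟨i + 1, h⟩} r)
    {p q : Fin m} (hlt : p < q) : v p ≤ r * v q := by
  have hr0 : 0 < r := r_pos v hpos r hr
  have h1 : (p : ℕ) + 1 < m := lt_of_le_of_lt (Nat.succ_le_of_lt hlt) q.isLt
  have hmem : v p / v ⟨(p : ℕ) + 1, h1⟩ ∈
      {x : ℝ | ∃ i : ℕ, ∃ h : i + 1 < m,
        x = v ⟨i, Nat.lt_of_succ_lt h⟩ / v ⟨i + 1, h⟩} := ⟨(p : ℕ), h1, rfl⟩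
  have h2 : v p / v ⟨(p : ℕ) + 1, h1⟩ ≤ r := hr.2 hmem
  have h4 : 0 < v ⟨(p : ℕ) + 1, h1⟩ := hpos _
  have h5 : v p ≤ r * v ⟨(p : ℕ) + 1, h1⟩ := by
    rw [div_le_iff₀ h4] at h2; linarith
  have h3 : v ⟨(p : ℕ) + 1, h1⟩ ≤ v q := by
    apply hmono.monotone
    exact Nat.succ_le_of_lt hlt
  nlinarith

lemma send_core (v : Fin m → ℝ) (hpos : ∀ i, 0 < v i) (hmono : StrictMono v) (r : ℝ)
    (hr : IsGreatest
      {x : ℝ | ∃ i : ℕ, ∃ h : i + 1 < m,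
        x = v ⟨i, Nat.lt_of_succ_lt h⟩ / v ⟨i + 1, h⟩} r)
    (dq gq : Fin m → ℕ) (p q : Fin m)
    (hdp : 0 < dq p) (hgq : 0 < gq q)
    (hmax : ∀ q', 0 < gq q' → v q' ≤ v q) :
    v p + Phi v (Function.update dq p (dq p - 1)) (Function.update gq q (gq q - 1)) ≤
      (1 + r) * v q + Phi v dq gq := by
  have hr0 : 0 < r := r_pos v hpos r hr
  rw [Phi_update_right, Phi_update_left]
  by_cases hpq : p = q
  · subst hpq
    rw [Function.update_self]
    have e1 : dq p - 1 - (gq p - 1) = dq p - gq p := by omega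
    rw [e1]
    have hexp : (1 + r) * v p = v p + r * v p := by ring
    rw [hexp]
    nlinarith [mul_pos hr0 (hpos p)]
  · rw [Function.update_of_ne (Ne.symm hpq)]
    have hexp : (1 + r) * v q = v q + r * v q := by ring
    rw [hexp]
    by_cases h1 : dq p ≤ gq p <;> by_cases h2 : gq q ≤ dq q
    · -- worst case: need v p ≤ r * v q
      have e1 : dq p - 1 - gq p = 0 := by omega
      have e2 : dq p - gq p = 0 := by omega
      have e3n : dq q - (gq q - 1) = (dq q - gq q) + 1 := by omega
      have e3 : ((dq q - (gq q - 1) : ℕ) : ℝ) = ((dq q - gq q : ℕ) : ℝ) + 1 := by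
        rw [e3n]; push_cast; ring
      rw [e1, e2, e3]
      have hgp : 0 < gq p := by omega
      have hvp : v p ≤ v q := hmax p hgp
      have hlt : p < q := by
        rcases lt_trichotomy p q with h | h | h
        · exact h
        · exact absurd h hpq
        · exact absurd (hmono h) (not_lt_of_ge hvp)
      have := v_le_r_mul v hpos hmono r hr hlt
      simp only [Nat.cast_zero]
      linarith
    · have e1 : dq p - 1 - gq p = 0 := by omega
      have e2 : dq p - gq p = 0 := by omega
      have e3 : dq q - (gq q - 1) = 0 := by omega
      have e4 : dq q - gq q = 0 := by omega
      rw [e1, e2, e3, e4]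
      have hgp : 0 < gq p := by omega
      have hvp : v p ≤ v q := hmax p hgp
      simp only [Nat.cast_zero]
      nlinarith [mul_pos hr0 (hpos q)]
    · have e1n : dq p - gq p = (dq p - 1 - gq p) + 1 := by omega
      have e1 : ((dq p - gq p : ℕ) : ℝ) = ((dq p - 1 - gq p : ℕ) : ℝ) + 1 := by
        rw [e1n]; push_cast; ring
      have e3n : dq q - (gq q - 1) = (dq q - gq q) + 1 := by omega
      have e3 : ((dq q - (gq q - 1) : ℕ) : ℝ) = ((dq q - gq q : ℕ) : ℝ) + 1 := by
        rw [e3n]; push_cast; ring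
      rw [e1, e3]
      nlinarith [mul_pos hr0 (hpos q), hpos q]
    · have e1n : dq p - gq p = (dq p - 1 - gq p) + 1 := by omega
      have e1 : ((dq p - gq p : ℕ) : ℝ) = ((dq p - 1 - gq p : ℕ) : ℝ) + 1 := by
        rw [e1n]; push_cast; ring
      have e3 : dq q - (gq q - 1) = 0 := by omega
      have e4 : dq q - gq q = 0 := by omega
      rw [e1, e3, e4]
      simp only [Nat.cast_zero]
      nlinarith [mul_pos hr0 (hpos q), hpos q]

lemma key (B : ℕ) (v : Fin m → ℝ) (hpos : ∀ i, 0 < v i) (hmono : StrictMono v)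
    (r : ℝ)
    (hr : IsGreatest
      {x : ℝ | ∃ i : ℕ, ∃ h : i + 1 < m,
        x = v ⟨i, Nat.lt_of_succ_lt h⟩ / v ⟨i + 1, h⟩} r)
    (g d : ℕ → Option (Fin m)) :
    ∀ (σ : List (BEvent m)) (k : ℕ) (sd sg : BState m m),
      Feasible (fun _ => B) id d σ k sd →
      GreedyFeasible v (fun _ => B) id g σ k sg →
      benefit v (run (fun _ => B) id d σ k sd) ≤
        benefit v sd +
          (1 + r) * (benefit v (run (fun _ => B) id g σ k sg) - benefit v sg) +
          Phi v sd.queue sg.queue := by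
  have hr0 : 0 < r := r_pos v hpos r hr
  intro σ
  induction σ with
  | nil =>
    intro k sd sg _ _
    simp only [run]
    have := Phi_nonneg v hpos sd.queue sg.queue
    nlinarith
  | cons e es ih =>
    intro k sd sg hd hg
    cases e with
    | arrive q =>
      simp only [run, Feasible, GreedyFeasible] at hd hg ⊢
      have hih := ih k _ _ hd hg
      have hb1 := benefit_arrive v B sd q
      have hb2 := benefit_arrive v B sg q
      have hPhi := arrive_Phi v hpos B sd sg q
      rw [hb1, hb2] at hih
      linarith
    | send =>
      simp only [run, Feasible, GreedyFeasible] at hd hg ⊢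
      obtain ⟨hgd, hd'⟩ := hd
      obtain ⟨hgg, hg'⟩ := hg
      have hih := ih (k + 1) _ _ hd' hg'
      cases hdk : d k with
      | none =>
        rw [hdk] at hgd hih
        have hgd' : ∀ q, sd.queue q = 0 := hgd
        cases hgk : g k with
        | none =>
          rw [hgk] at hih
          exact hih
        | some q =>
          rw [hgk] at hgg hih
          have hgg' : 0 < sg.queue q ∧ ∀ q', 0 < sg.queue q' → v q' ≤ v q := hgg
          have hsd : sendStep (m := m) id sd none = sd := rfl
          rw [hsd] at hih ⊢
          have hb2 : benefit v (sendStep id sg (some q)) = benefit v sg + v q :=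
            benefit_send v sg q hgg'.1
          have hq2 : (sendStep id sg (some q)).queue =
              Function.update sg.queue q (sg.queue q - 1) := by
            simp [sendStep, hgg'.1]
          rw [hb2, hq2] at hih
          have hPhi : Phi v sd.queue (Function.update sg.queue q (sg.queue q - 1)) =
              Phi v sd.queue sg.queue := by
            rw [Phi_update_right]
            have e1 : sd.queue q - (sg.queue q - 1) = 0 := by
              have := hgd' q; omega
            have e2 : sd.queue q - sg.queue q = 0 := by
              have := hgd' q; omega
            rw [e1, e2]; ring
          rw [hPhi] at hih
          nlinarith [hpos q]
      | some p =>
        rw [hdk] at hgd hih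
        have hgd' : 0 < sd.queue p := hgd
        have hb1 : benefit v (sendStep id sd (some p)) = benefit v sd + v p :=
          benefit_send v sd p hgd'
        have hq1 : (sendStep id sd (some p)).queue =
            Function.update sd.queue p (sd.queue p - 1) := by
          simp [sendStep, hgd']
        cases hgk : g k with
        | none =>
          rw [hgk] at hgg hih
          have hgg' : ∀ q, sg.queue q = 0 := hgg
          have hsg : sendStep (m := m) id sg none = sg := rfl
          rw [hsg] at hih ⊢
          rw [hb1, hq1] at hih
          have hPhi : Phi v (Function.update sd.queue p (sd.queue p - 1)) sg.queue =
              Phi v sd.queue sg.queue - v p := by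
            rw [Phi_update_left]
            have e1 : ((sd.queue p - 1 - sg.queue p : ℕ) : ℝ) =
                ((sd.queue p - sg.queue p : ℕ) : ℝ) - 1 := by
              have hz := hgg' p
              have e : sd.queue p - sg.queue p = (sd.queue p - 1 - sg.queue p) + 1 := by omega
              rw [e]; push_cast; ring
            rw [e1]; ring
          rw [hPhi] at hih
          linarith
        | some q =>
          rw [hgk] at hgg hih
          have hgg' : 0 < sg.queue q ∧ ∀ q', 0 < sg.queue q' → v q' ≤ v q := hgg
          have hb2 : benefit v (sendStep id sg (some q)) = benefit v sg + v q :=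
            benefit_send v sg q hgg'.1
          have hq2 : (sendStep id sg (some q)).queue =
              Function.update sg.queue q (sg.queue q - 1) := by
            simp [sendStep, hgg'.1]
          rw [hb1, hb2, hq1, hq2] at hih
          have hcore := send_core v hpos hmono r hr sd.queue sg.queue p q hgd' hgg'.1
            (fun q' h => hgg'.2 q' h)
          nlinarith

end Aux

/-- In the restricted class-segregated buffer model with
exactly one queue per value `v 0 < ... < v (m-1)` (so `qval = id`), all queues
of capacity `B`, GREEDY is `(1+r)`-competitive, where
`r = max_{0 ≤ i < m-1} v i / v (i+1)`: the benefit of any feasible diligent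
schedule `d` is at most `1 + r` times the benefit of any GREEDY schedule. -/
theorem greedy_one_plus_r_competitive
    (m B : ℕ) (v : Fin m → ℝ) (hpos : ∀ i, 0 < v i) (hmono : StrictMono v)
    (r : ℝ)
    (hr : IsGreatest
      {x : ℝ | ∃ i : ℕ, ∃ h : i + 1 < m,
        x = v ⟨i, Nat.lt_of_succ_lt h⟩ / v ⟨i + 1, h⟩} r)
    (σ : List (BEvent m)) (g d : ℕ → Option (Fin m))
    (hg : GreedyFeasible v (fun _ => B) id g σ 0 (initState m m))
    (hd : Feasible (fun _ => B) id d σ 0 (initState m m)) :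
    benefit v (run (fun _ => B) id d σ 0 (initState m m)) ≤
      (1 + r) * benefit v (run (fun _ => B) id g σ 0 (initState m m)) := by
  have h := key B v hpos hmono r hr g d σ 0 (initState m m) (initState m m) hd hg
  have h0 : benefit v (initState m m) = 0 := by simp [benefit, initState]
  have h1 : Phi v (initState m m).queue (initState m m).queue = 0 := by
    simp [Phi, initState]
  rw [h0, h1] at h
  linarith

end BufferModel
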